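/- arXiv:1910.12161 — 5 statements merged into one kernel-verified Lean document; each statement's English description precedes it below -/
import Mathlib

section
/- For measurable f:(0,∞)→ℝ with ∫₀^∞ f(x)²/x dx < ∞, the inequality ∫₀^∞ (f(x)/x²)(∫₀^x f(y) dy) dx ≤ ∫₀^∞ f(x)²/x dx holds. -/
/-! Write the left side as `∫∫_{0<y≤x} f(x) f(y) / x²` and use `f(x) f(y) ≤ (f(x)² + f(y)²) / 2`.
The first half integrates in `y` to `f(x)² / x`. For the second, Tonelli and `∫_y^∞ x⁻² dx = 1/y`
turn `∫₀^∞ x⁻² ∫₀^x f(y)² dy dx` into `∫₀^∞ f(y)² / y dy`. Each half is half the right side. -/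

open MeasureTheory Set
open scoped ENNReal

theorem abs_mul_integral_le {α : Type*} [MeasurableSpace α] {μ : Measure α} [IsFiniteMeasure μ]
    (a : ℝ) {g : α → ℝ} (hg : Integrable (fun y => g y ^ 2) μ) :
    |a * ∫ y, g y ∂μ| ≤ (a ^ 2 * μ.real univ + ∫ y, g y ^ 2 ∂μ) / 2 := by
  have hbound : Integrable (fun y => (a ^ 2 + g y ^ 2) / 2) μ :=
    ((integrable_const _).add hg).div_const 2
  calc |a * ∫ y, g y ∂μ| = |a| * |∫ y, g y ∂μ| := abs_mul _ _
    _ ≤ |a| * ∫ y, |g y| ∂μ := by gcongr; exact abs_integral_le_integral_abs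
    _ = ∫ y, |a| * |g y| ∂μ := (integral_const_mul _ _).symm
    _ ≤ ∫ y, (a ^ 2 + g y ^ 2) / 2 ∂μ := by
        refine integral_mono_of_nonneg (ae_of_all _ fun y => by positivity) hbound
          (ae_of_all _ fun y => ?_)
        have := two_mul_le_add_sq |a| |g y|
        rw [sq_abs, sq_abs] at this
        linarith
    _ = (a ^ 2 * μ.real univ + ∫ y, g y ^ 2 ∂μ) / 2 := by
        rw [integral_div, integral_add (integrable_const _) hg, integral_const, smul_eq_mul,
          mul_comm]

theorem abs_div_sq_mul_integral_Ioc_le {g : ℝ → ℝ} {x : ℝ} (hx : 0 < x)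
    (hg : IntegrableOn (fun y => g y ^ 2) (Ioc 0 x)) :
    |g x / x ^ 2 * ∫ y in Ioc 0 x, g y| ≤
      (g x ^ 2 / x + (∫ y in Ioc 0 x, g y ^ 2) / x ^ 2) / 2 := by
  have hamgm := abs_mul_integral_le (g x) hg
  rw [measureReal_restrict_apply_univ, Real.volume_real_Ioc_of_le hx.le, sub_zero] at hamgm
  rw [div_mul_eq_mul_div, abs_div, abs_of_pos (by positivity : (0:ℝ) < x ^ 2)]
  calc |g x * ∫ y in Ioc 0 x, g y| / x ^ 2
      ≤ (g x ^ 2 * x + ∫ y in Ioc 0 x, g y ^ 2) / 2 / x ^ 2 := by gcongr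
    _ = (g x ^ 2 / x + (∫ y in Ioc 0 x, g y ^ 2) / x ^ 2) / 2 := by field_simp

theorem integrableOn_Ioc_of_integrableOn_div {g : ℝ → ℝ}
    (hg : IntegrableOn (fun y => g y / y) (Ioi 0)) (x : ℝ) : IntegrableOn g (Ioc 0 x) :=
  ((hg.mono_set Ioc_subset_Ioi_self).mul_continuousOn_of_subset continuousOn_id
    measurableSet_Ioc isCompact_Icc Ioc_subset_Icc_self).congr_fun
    (fun _ hy => div_mul_cancel₀ _ hy.1.ne') measurableSet_Ioc

theorem monotone_integral_Ioc {α : Type*} [MeasurableSpace α] [LinearOrder α] {μ : Measure α}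
    {g : α → ℝ} (hg : 0 ≤ g) (a : α) (hint : ∀ x, IntegrableOn g (Ioc a x) μ) :
    Monotone fun x => ∫ y in Ioc a x, g y ∂μ := fun _ x' hxx' =>
  setIntegral_mono_set (hint x') (ae_of_all _ hg) (Ioc_subset_Ioc_right hxx').eventuallyLE

theorem lintegral_Ioi_lintegral_Ioc_swap {k : ℝ → ℝ → ℝ≥0∞}
    (hk : Measurable (Function.uncurry k)) :
    ∫⁻ x in Ioi 0, ∫⁻ y in Ioc 0 x, k x y = ∫⁻ y in Ioi 0, ∫⁻ x in Ici y, k x y := by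
  set T : Set (ℝ × ℝ) := {p | 0 < p.2 ∧ p.2 ≤ p.1}
  have hT : MeasurableSet T :=
    (measurableSet_lt measurable_const measurable_snd).inter
      (measurableSet_le measurable_snd measurable_fst)
  have hrow : ∀ x, ∫⁻ y in Ioc 0 x, k x y = ∫⁻ y, T.indicator (Function.uncurry k) (x, y) := by
    intro x
    rw [← lintegral_indicator measurableSet_Ioc]
    rfl
  have hcol : ∀ y, ∫⁻ x, T.indicator (Function.uncurry k) (x, y) =
      (Ioi 0).indicator (fun y => ∫⁻ x in Ici y, k x y) y := by
    intro y
    by_cases hy : 0 < y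
    · rw [indicator_of_mem (mem_Ioi.2 hy), ← lintegral_indicator measurableSet_Ici]
      congr with x
      simp [indicator_apply, T, hy]
    · simp [T, hy]
  have hsupp : (fun x => ∫⁻ y in Ioc 0 x, k x y).support ⊆ Ioi 0 :=
    Function.support_subset_iff'.2 fun x hx => by
      simp only [Ioc_eq_empty (show ¬(0 : ℝ) < x from hx), Measure.restrict_empty,
        lintegral_zero_measure]
  rw [setLIntegral_eq_of_support_subset hsupp, ← lintegral_indicator measurableSet_Ioi]
  simp_rw [hrow, ← hcol]
  exact lintegral_lintegral_swap (hk.indicator hT).aemeasurable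

theorem lintegral_Ici_ofReal_inv_sq {y : ℝ} (hy : 0 < y) :
    ∫⁻ x in Ici y, ENNReal.ofReal (x ^ 2)⁻¹ = ENNReal.ofReal y⁻¹ := by
  have hrpow : EqOn (fun x : ℝ => x ^ (-2 : ℝ)) (fun x => (x ^ 2)⁻¹) (Ioi y) := fun x hx => by
    simp [Real.rpow_neg (hy.trans hx).le]
  have hint : IntegrableOn (fun x : ℝ => (x ^ 2)⁻¹) (Ioi y) :=
    (integrableOn_Ioi_rpow_of_lt (by norm_num) hy).congr_fun hrpow measurableSet_Ioi
  rw [← Measure.restrict_congr_set Ioi_ae_eq_Ici,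
    ← ofReal_integral_eq_lintegral_ofReal hint (ae_of_all _ fun x => by positivity),
    ← setIntegral_congr_fun measurableSet_Ioi hrpow, integral_Ioi_rpow_of_lt (by norm_num) hy]
  norm_num [Real.rpow_neg_one]

theorem lintegral_Ioi_inv_sq_mul_lintegral_Ioc {φ : ℝ → ℝ≥0∞} (hφ : Measurable φ) :
    ∫⁻ x in Ioi 0, ENNReal.ofReal (x ^ 2)⁻¹ * ∫⁻ y in Ioc 0 x, φ y =
      ∫⁻ y in Ioi 0, ENNReal.ofReal y⁻¹ * φ y := by
  have hk : Measurable (Function.uncurry fun x y : ℝ => ENNReal.ofReal (x ^ 2)⁻¹ * φ y) :=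
    (measurable_fst.pow_const 2).inv.ennreal_ofReal.mul (hφ.comp measurable_snd)
  simp_rw [← lintegral_const_mul _ hφ]
  rw [lintegral_Ioi_lintegral_Ioc_swap hk]
  refine setLIntegral_congr_fun measurableSet_Ioi fun y hy => ?_
  rw [lintegral_mul_const _ (by fun_prop), lintegral_Ici_ofReal_inv_sq hy]

theorem lintegral_ofReal_integral_Ioc_div_sq {g : ℝ → ℝ} (hg : Measurable g) (hg0 : 0 ≤ g)
    (hint : IntegrableOn (fun y => g y / y) (Ioi 0)) :
    ∫⁻ x in Ioi 0, ENNReal.ofReal ((∫ y in Ioc 0 x, g y) / x ^ 2) =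
      ENNReal.ofReal (∫ y in Ioi 0, g y / y) := by
  calc ∫⁻ x in Ioi 0, ENNReal.ofReal ((∫ y in Ioc 0 x, g y) / x ^ 2)
      = ∫⁻ x in Ioi 0, ENNReal.ofReal (x ^ 2)⁻¹ * ∫⁻ y in Ioc 0 x, ENNReal.ofReal (g y) := by
        refine lintegral_congr fun x => ?_
        rw [div_eq_inv_mul, ENNReal.ofReal_mul (by positivity),
          ofReal_integral_eq_lintegral_ofReal (integrableOn_Ioc_of_integrableOn_div hint x)
            (ae_of_all _ hg0)]
    _ = ∫⁻ y in Ioi 0, ENNReal.ofReal y⁻¹ * ENNReal.ofReal (g y) :=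
        lintegral_Ioi_inv_sq_mul_lintegral_Ioc hg.ennreal_ofReal
    _ = ∫⁻ y in Ioi 0, ENNReal.ofReal (g y / y) := by
        refine setLIntegral_congr_fun measurableSet_Ioi fun y hy => ?_
        rw [← ENNReal.ofReal_mul (inv_nonneg.2 (le_of_lt hy)), inv_mul_eq_div]
    _ = ENNReal.ofReal (∫ y in Ioi 0, g y / y) :=
        (ofReal_integral_eq_lintegral_ofReal hint
          ((ae_restrict_iff' measurableSet_Ioi).2 (ae_of_all _ fun y hy =>
            div_nonneg (hg0 y) (le_of_lt hy)))).symm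

theorem integrableOn_integral_Ioc_div_sq {g : ℝ → ℝ} (hg : Measurable g) (hg0 : 0 ≤ g)
    (hint : IntegrableOn (fun y => g y / y) (Ioi 0)) :
    IntegrableOn (fun x => (∫ y in Ioc 0 x, g y) / x ^ 2) (Ioi 0) := by
  refine ⟨?_, ?_⟩
  · exact ((monotone_integral_Ioc hg0 0 (integrableOn_Ioc_of_integrableOn_div hint)).measurable.div
      (measurable_id.pow_const 2)).aestronglyMeasurable
  · rw [hasFiniteIntegral_iff_ofReal
      (ae_of_all _ fun x => div_nonneg (integral_nonneg hg0) (sq_nonneg x)),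
      lintegral_ofReal_integral_Ioc_div_sq hg hg0 hint]
    exact ENNReal.ofReal_lt_top

theorem integral_Ioi_integral_Ioc_div_sq {g : ℝ → ℝ} (hg : Measurable g) (hg0 : 0 ≤ g)
    (hint : IntegrableOn (fun y => g y / y) (Ioi 0)) :
    ∫ x in Ioi 0, (∫ y in Ioc 0 x, g y) / x ^ 2 = ∫ y in Ioi 0, g y / y := by
  rw [integral_eq_lintegral_of_nonneg_ae
      (ae_of_all _ fun x => div_nonneg (integral_nonneg hg0) (sq_nonneg x))
      (integrableOn_integral_Ioc_div_sq hg hg0 hint).aestronglyMeasurable,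
    lintegral_ofReal_integral_Ioc_div_sq hg hg0 hint, ENNReal.toReal_ofReal
      (setIntegral_nonneg measurableSet_Ioi fun y hy => div_nonneg (hg0 y) (le_of_lt hy))]

theorem dual_hardy_inequality (f : ℝ → ℝ) (hf : Measurable f)
    (hint : IntegrableOn (fun x => f x ^ 2 / x) (Ioi 0)) :
    ∫ x in Ioi (0:ℝ), (f x / x ^ 2) * (∫ y in (0:ℝ)..x, f y) ≤
      ∫ x in Ioi (0:ℝ), f x ^ 2 / x := by
  have hsq0 : (0 : ℝ → ℝ) ≤ fun y => f y ^ 2 := fun y => sq_nonneg (f y)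
  have hG := integrableOn_integral_Ioc_div_sq (hf.pow_const 2) hsq0 hint
  calc ∫ x in Ioi 0, f x / x ^ 2 * ∫ y in 0..x, f y
      = ∫ x in Ioi 0, f x / x ^ 2 * ∫ y in Ioc 0 x, f y :=
        setIntegral_congr_fun measurableSet_Ioi fun x hx => by
          rw [intervalIntegral.integral_of_le (le_of_lt hx)]
    -- valid without integrability of the integrand, which is therefore never needed
    _ ≤ ∫ x in Ioi 0, |f x / x ^ 2 * ∫ y in Ioc 0 x, f y| :=
        (le_abs_self _).trans abs_integral_le_integral_abs
    _ ≤ ∫ x in Ioi 0, (f x ^ 2 / x + (∫ y in Ioc 0 x, f y ^ 2) / x ^ 2) / 2 :=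
        integral_mono_of_nonneg (ae_of_all _ fun _ => abs_nonneg _) ((hint.add hG).div_const 2)
          ((ae_restrict_iff' measurableSet_Ioi).2 (ae_of_all _ fun x hx =>
            abs_div_sq_mul_integral_Ioc_le hx (integrableOn_Ioc_of_integrableOn_div hint x)))
    _ = ∫ x in Ioi 0, f x ^ 2 / x := by
        rw [integral_div, integral_add hint hG,
          integral_Ioi_integral_Ioc_div_sq (hf.pow_const 2) hsq0 hint]
        ring
end

section
/- For p > 1, r > 1, and measurable nonnegative f:(0,∞)→ℝ, ∫₀^∞ x^{-r} (∫₀^x f(y) dy)^p dx ≤ (p/(r-1))^p ∫₀^∞ x^{-r} (x f(x))^p dx. -/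
open MeasureTheory Set
open scoped ENNReal

/-!
With `s = (r - 1) / p`, write `g = (g y^a) · y^(-a)` where `a = (1 - s)(p - 1)/p` and apply
Hölder on `(0, x)`: since `∫₀ˣ y^(s-1) dy = x^s / s`, this gives
`(∫₀ˣ g)^p ≤ (x^s / s)^(p-1) ∫₀ˣ g(y)^p y^((1-s)(p-1)) dy`.
After multiplying by `x^(-r)` the outer weight is `s^(1-p) x^(-s-1)`, and exchanging the order of
integration with `∫_y^∞ x^(-s-1) dx = y^(-s) / s` yields `s^(-p) ∫ y^(p-r) g(y)^p dy`.
-/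

theorem ENNReal.rpow_lintegral_le_lintegral_rpow_mul_mul_lintegral_rpow {α : Type*}
    [MeasurableSpace α] {μ : Measure α} {p : ℝ} (hp : 1 < p) {g w : α → ℝ≥0∞}
    (hg : AEMeasurable g μ) (hw : AEMeasurable w μ) (hw0 : ∀ᵐ a ∂μ, w a ≠ 0)
    (hw_top : ∀ᵐ a ∂μ, w a ≠ ∞) :
    (∫⁻ a, g a ∂μ) ^ p ≤
      (∫⁻ a, g a ^ p * w a ∂μ) * (∫⁻ a, w a ^ (-(p - 1)⁻¹) ∂μ) ^ (p - 1) := by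
  have hp0 : 0 < p := by linarith
  have hpq : p.HolderConjugate p.conjExponent := .conjExponent hp
  have hsplit : ∀ᵐ a ∂μ, g a = g a * w a ^ p⁻¹ * w a ^ (-p⁻¹) := by
    filter_upwards [hw0, hw_top] with a h0 htop
    rw [mul_assoc, ← ENNReal.rpow_add _ _ h0 htop, add_neg_cancel,
      ENNReal.rpow_zero, mul_one]
  have hholder := ENNReal.lintegral_mul_le_Lp_mul_Lq μ hpq (f := g * w ^ p⁻¹)
    (g := fun a => w a ^ (-p⁻¹)) (hg.mul (hw.pow_const p⁻¹)) (hw.pow_const (-p⁻¹))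
  have hq : -p⁻¹ * p.conjExponent = -(p - 1)⁻¹ := by
    rw [Real.conjExponent]; field_simp
  simp only [Pi.mul_apply, Pi.pow_apply, ENNReal.mul_rpow_of_nonneg _ _ hp0.le,
    ENNReal.rpow_inv_rpow hp0.ne', ← ENNReal.rpow_mul, hq] at hholder
  rw [← lintegral_congr_ae hsplit] at hholder
  calc (∫⁻ a, g a ∂μ) ^ p
      ≤ ((∫⁻ a, g a ^ p * w a ∂μ) ^ (1 / p) *
          (∫⁻ a, w a ^ (-(p - 1)⁻¹) ∂μ) ^ (1 / p.conjExponent)) ^ p := by gcongr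
    _ = _ := by
      rw [ENNReal.mul_rpow_of_nonneg _ _ hp0.le, ← ENNReal.rpow_mul, ← ENNReal.rpow_mul,
        one_div_mul_cancel hp0.ne', ENNReal.rpow_one, ← hpq.div_conj_eq_sub_one]
      ring_nf

lemma lintegral_Ioo_ofReal_rpow_sub_one {t x : ℝ} (ht : 0 < t) (hx : 0 < x) :
    ∫⁻ y in Ioo 0 x, ENNReal.ofReal y ^ (t - 1) =
      ENNReal.ofReal t⁻¹ * ENNReal.ofReal x ^ t := by
  have hint : IntegrableOn (fun y : ℝ => y ^ (t - 1)) (Ioo 0 x) := by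
    have h := intervalIntegral.intervalIntegrable_rpow' (a := 0) (b := x) (r := t - 1)
      (by linarith)
    rw [intervalIntegrable_iff_integrableOn_Ioc_of_le hx.le] at h
    exact h.mono_set Ioo_subset_Ioc_self
  rw [setLIntegral_congr_fun measurableSet_Ioo fun y hy => ENNReal.ofReal_rpow_of_pos hy.1,
    ← ofReal_integral_eq_lintegral_ofReal hint, ENNReal.ofReal_rpow_of_pos hx,
    ← ENNReal.ofReal_mul (by positivity), ← integral_Ioc_eq_integral_Ioo,
    ← intervalIntegral.integral_of_le hx.le, integral_rpow (by simp [ht]), sub_add_cancel,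
    Real.zero_rpow ht.ne', sub_zero, inv_mul_eq_div]
  exact ae_restrict_of_forall_mem measurableSet_Ioo fun y hy => Real.rpow_nonneg hy.1.le _

lemma lintegral_Ioi_ofReal_rpow_neg_sub_one {t x : ℝ} (ht : 0 < t) (hx : 0 < x) :
    ∫⁻ y in Ioi x, ENNReal.ofReal y ^ (-t - 1) =
      ENNReal.ofReal t⁻¹ * ENNReal.ofReal x ^ (-t) := by
  have he : -t - 1 < -1 := by linarith
  rw [setLIntegral_congr_fun measurableSet_Ioi
      fun y hy => ENNReal.ofReal_rpow_of_pos (hx.trans hy),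
    ← ofReal_integral_eq_lintegral_ofReal (integrableOn_Ioi_rpow_of_lt he hx),
    integral_Ioi_rpow_of_lt he hx, ENNReal.ofReal_rpow_of_pos hx,
    ← ENNReal.ofReal_mul (by positivity)]
  · congr 1
    rw [sub_add_cancel, div_neg, neg_div, neg_neg, inv_mul_eq_div]
  exact ae_restrict_of_forall_mem measurableSet_Ioi fun y hy => by
    have : 0 < y := hx.trans hy
    positivity

theorem lintegral_Ioi_lintegral_Ioo_swap {F : ℝ → ℝ → ℝ≥0∞}
    (hF : Measurable (Function.uncurry F)) :
    ∫⁻ x in Ioi 0, ∫⁻ y in Ioo 0 x, F x y =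
      ∫⁻ y in Ioi 0, ∫⁻ x in Ioi y, F x y := by
  let T := {z : ℝ × ℝ | z.2 < z.1}
  have hT : MeasurableSet T := measurableSet_lt measurable_snd measurable_fst
  have h1 : EqOn (fun x => ∫⁻ y in Ioo 0 x, F x y)
      (fun x => ∫⁻ y in Ioi 0, T.indicator (Function.uncurry F) (x, y)) (Ioi 0) := by
    intro x _
    have : ∀ y, T.indicator (Function.uncurry F) (x, y) = (Iio x).indicator (F x) y :=
      fun y => rfl
    simp only [this]
    rw [lintegral_indicator measurableSet_Iio, Measure.restrict_restrict measurableSet_Iio,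
      Iio_inter_Ioi]
  have h2 : EqOn (fun y => ∫⁻ x in Ioi y, F x y)
      (fun y => ∫⁻ x in Ioi 0, T.indicator (Function.uncurry F) (x, y)) (Ioi 0) := by
    intro y hy
    have : ∀ x, T.indicator (Function.uncurry F) (x, y) = (Ioi y).indicator (F · y) x :=
      fun x => rfl
    simp only [this]
    rw [lintegral_indicator measurableSet_Ioi, Measure.restrict_restrict measurableSet_Ioi,
      inter_eq_left.2 (Ioi_subset_Ioi hy.le)]
  rw [setLIntegral_congr_fun measurableSet_Ioi h1, setLIntegral_congr_fun measurableSet_Ioi h2]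
  exact lintegral_lintegral_swap (hF.indicator hT).aemeasurable

lemma lintegral_Ioi_rpow_mul_lintegral_Ioo {t : ℝ} (ht : 0 < t) {G : ℝ → ℝ≥0∞}
    (hG : Measurable G) :
    ∫⁻ x in Ioi 0, ENNReal.ofReal x ^ (-t - 1) * ∫⁻ y in Ioo 0 x, G y =
      ENNReal.ofReal t⁻¹ * ∫⁻ y in Ioi 0, ENNReal.ofReal y ^ (-t) * G y := by
  calc ∫⁻ x in Ioi 0, ENNReal.ofReal x ^ (-t - 1) * ∫⁻ y in Ioo 0 x, G y
      = ∫⁻ x in Ioi 0, ∫⁻ y in Ioo 0 x, ENNReal.ofReal x ^ (-t - 1) * G y := by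
        simp only [lintegral_const_mul _ hG]
    _ = ∫⁻ y in Ioi 0, ∫⁻ x in Ioi y, ENNReal.ofReal x ^ (-t - 1) * G y :=
        lintegral_Ioi_lintegral_Ioo_swap (by fun_prop)
    _ = ∫⁻ y in Ioi 0, ENNReal.ofReal t⁻¹ * (ENNReal.ofReal y ^ (-t) * G y) := by
        refine setLIntegral_congr_fun measurableSet_Ioi fun y hy => ?_
        rw [lintegral_mul_const _ (by fun_prop), lintegral_Ioi_ofReal_rpow_neg_sub_one ht hy,
          mul_assoc]
    _ = _ := lintegral_const_mul _ (by fun_prop)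

lemma rpow_lintegral_Ioo_le {p s x : ℝ} (hp : 1 < p) (hs : 0 < s) (hx : 0 < x)
    {g : ℝ → ℝ≥0∞} (hg : AEMeasurable g (volume.restrict (Ioo 0 x))) :
    (∫⁻ y in Ioo 0 x, g y) ^ p ≤ (ENNReal.ofReal s⁻¹ * ENNReal.ofReal x ^ s) ^ (p - 1) *
      ∫⁻ y in Ioo 0 x, g y ^ p * ENNReal.ofReal y ^ ((1 - s) * (p - 1)) := by
  have hweight : ∫⁻ y in Ioo 0 x, (ENNReal.ofReal y ^ ((1 - s) * (p - 1))) ^ (-(p - 1)⁻¹) =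
      ENNReal.ofReal s⁻¹ * ENNReal.ofReal x ^ s := by
    have he : (1 - s) * (p - 1) * -(p - 1)⁻¹ = s - 1 := by
      rw [mul_neg, mul_assoc, mul_inv_cancel₀ (by linarith), mul_one, neg_sub]
    simp_rw [← ENNReal.rpow_mul, he]
    exact lintegral_Ioo_ofReal_rpow_sub_one hs hx
  rw [← hweight, mul_comm]
  exact ENNReal.rpow_lintegral_le_lintegral_rpow_mul_mul_lintegral_rpow hp hg (by fun_prop)
    (ae_restrict_of_forall_mem measurableSet_Ioo fun y hy =>
      (ENNReal.rpow_pos (ENNReal.ofReal_pos.2 hy.1) ENNReal.ofReal_ne_top).ne')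
    (ae_restrict_of_forall_mem measurableSet_Ioo fun y hy =>
      ENNReal.rpow_ne_top_of_ne_zero (ENNReal.ofReal_pos.2 hy.1).ne' ENNReal.ofReal_ne_top)

theorem lintegral_rpow_neg_mul_rpow_lintegral_Ioo_le {p r : ℝ} (hp : 1 < p) (hr : 1 < r)
    {g : ℝ → ℝ≥0∞} (hg : Measurable g) :
    ∫⁻ x in Ioi 0, ENNReal.ofReal x ^ (-r) * (∫⁻ y in Ioo 0 x, g y) ^ p ≤
      ENNReal.ofReal (p / (r - 1)) ^ p *
        ∫⁻ x in Ioi 0, ENNReal.ofReal x ^ (-r) * (ENNReal.ofReal x * g x) ^ p := by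
  set s := (r - 1) / p with hs_def
  have hs : 0 < s := div_pos (by linarith) (by linarith)
  have hsp : s * p = r - 1 := div_mul_cancel₀ _ (by linarith)
  set e := (1 - s) * (p - 1) with he_def
  set c := ENNReal.ofReal s⁻¹ with hc
  have hc0 : c ≠ 0 := (ENNReal.ofReal_pos.2 (inv_pos.2 hs)).ne'
  have hc_top : c ≠ ∞ := ENNReal.ofReal_ne_top
  have hc_pow : c ^ (p - 1) * c = c ^ p := by
    conv_rhs => rw [← sub_add_cancel p 1, ENNReal.rpow_add _ _ hc0 hc_top, ENNReal.rpow_one]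
  clear_value s e c
  have hpointwise : ∀ x ∈ Ioi (0 : ℝ),
      ENNReal.ofReal x ^ (-r) * (∫⁻ y in Ioo 0 x, g y) ^ p ≤
      c ^ (p - 1) * (ENNReal.ofReal x ^ (-s - 1) *
        ∫⁻ y in Ioo 0 x, g y ^ p * ENNReal.ofReal y ^ e) := by
    intro x hx
    calc ENNReal.ofReal x ^ (-r) * (∫⁻ y in Ioo 0 x, g y) ^ p
        ≤ ENNReal.ofReal x ^ (-r) * ((c * ENNReal.ofReal x ^ s) ^ (p - 1) *
            ∫⁻ y in Ioo 0 x, g y ^ p * ENNReal.ofReal y ^ e) := by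
          rw [hc, he_def]
          gcongr
          exact rpow_lintegral_Ioo_le hp hs hx hg.aemeasurable
      _ = _ := by
        rw [ENNReal.mul_rpow_of_nonneg _ _ (by linarith), ← ENNReal.rpow_mul,
          show -s - 1 = -r + s * (p - 1) by linear_combination -hsp,
          ENNReal.rpow_add _ _ (ENNReal.ofReal_pos.2 hx).ne' ENNReal.ofReal_ne_top]
        ring
  calc ∫⁻ x in Ioi 0, ENNReal.ofReal x ^ (-r) * (∫⁻ y in Ioo 0 x, g y) ^ p
      ≤ ∫⁻ x in Ioi 0, c ^ (p - 1) * (ENNReal.ofReal x ^ (-s - 1) *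
          ∫⁻ y in Ioo 0 x, g y ^ p * ENNReal.ofReal y ^ e) :=
        setLIntegral_mono' measurableSet_Ioi hpointwise
    _ = c ^ (p - 1) * (c *
          ∫⁻ y in Ioi 0, ENNReal.ofReal y ^ (-s) * (g y ^ p * ENNReal.ofReal y ^ e)) := by
        rw [lintegral_const_mul' _ _ (ENNReal.rpow_ne_top_of_nonneg (by linarith) hc_top),
          lintegral_Ioi_rpow_mul_lintegral_Ioo hs (by fun_prop), hc]
    _ = c ^ p * ∫⁻ x in Ioi 0, ENNReal.ofReal x ^ (-r) * (ENNReal.ofReal x * g x) ^ p := by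
        rw [← mul_assoc, hc_pow]
        congr 1
        refine setLIntegral_congr_fun measurableSet_Ioi fun y hy => ?_
        have hy0 : ENNReal.ofReal y ≠ 0 := (ENNReal.ofReal_pos.2 hy).ne'
        rw [ENNReal.mul_rpow_of_nonneg _ _ (by linarith), ← mul_assoc (_ ^ (-r)),
          ← ENNReal.rpow_add _ _ hy0 ENNReal.ofReal_ne_top,
          show -r + p = -s + e by rw [he_def]; linear_combination hsp,
          ENNReal.rpow_add _ _ hy0 ENNReal.ofReal_ne_top]
        ring
    _ = _ := by rw [hc, hs_def, inv_div]

theorem ENNReal.ofReal_rpow_le (u : ℝ) {p : ℝ} (hp : 0 < p) :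
    ENNReal.ofReal u ^ p ≤ ENNReal.ofReal (u ^ p) := by
  rcases le_or_gt 0 u with hu | hu
  · exact (ENNReal.ofReal_rpow_of_nonneg hu hp.le).le
  · rw [ENNReal.ofReal_of_nonpos hu.le, ENNReal.zero_rpow_of_pos hp]
    positivity

theorem hardy_littlewood_polya_330_general (p r : ℝ) (hp : 1 < p) (hr : 1 < r)
    (f : ℝ → ℝ) (hf : Measurable f) :
    ∫⁻ x in Ioi (0:ℝ), (ENNReal.ofReal x) ^ (-r) * (∫⁻ y in Ioo (0:ℝ) x, ENNReal.ofReal (f y)) ^ p ≤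
      ENNReal.ofReal ((p / (r - 1)) ^ p) *
        ∫⁻ x in Ioi (0:ℝ), ENNReal.ofReal (x ^ (-r) * (x * f x) ^ p) := by
  refine (lintegral_rpow_neg_mul_rpow_lintegral_Ioo_le hp hr hf.ennreal_ofReal).trans ?_
  have hp0 : 0 ≤ p := by linarith
  have hr0 : 0 ≤ r - 1 := by linarith
  rw [← ENNReal.ofReal_rpow_of_nonneg (div_nonneg hp0 hr0) hp0]
  gcongr _ * ?_
  refine setLIntegral_mono' measurableSet_Ioi fun x hx => ?_
  rw [← ENNReal.ofReal_mul hx.le, ENNReal.ofReal_rpow_of_pos hx,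
    ENNReal.ofReal_mul (Real.rpow_nonneg hx.le _)]
  gcongr
  exact ENNReal.ofReal_rpow_le _ (by linarith)

theorem hardy_littlewood_polya_330 (p r : ℝ) (hp : 1 < p) (hr : 1 < r)
    (f : ℝ → ℝ) (hf : Measurable f) (hf0 : ∀ x, 0 ≤ f x) :
    ∫⁻ x in Ioi (0:ℝ), (ENNReal.ofReal x) ^ (-r) * (∫⁻ y in Ioo (0:ℝ) x, ENNReal.ofReal (f y)) ^ p ≤
      ENNReal.ofReal ((p / (r - 1)) ^ p) *
        ∫⁻ x in Ioi (0:ℝ), ENNReal.ofReal (x ^ (-r) * (x * f x) ^ p) :=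
  hardy_littlewood_polya_330_general p r hp hr f hf
end

section
/- If w:(0,∞)→ℝ is continuously differentiable, compactly supported in [0,∞) (with w extended continuously to 0), and satisfies ∫₀^∞ w(x)²/x dx < ∞, then ∫₀^∞ w(x)·( w'(x) − d/dx[(1/x)∫₀^x w(y) dy] ) dx ≤ 0. -/
/-!
Write `m x = (1 / x) * ∫₀ˣ w`. Differentiating `x * m x = ∫₀ˣ w` gives `w = m + x m'`, hence
`w (w' - m') = ((w² - m²) / 2)' - x m'²`. Integrating over `(0, R]`, with `R` beyond the support
of `w`, bounds the integral by `-m(R)² / 2 ≤ 0`; the boundary term at `0` vanishes because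
`m` extends continuously to `0` with `m 0 = w 0`.
-/

open MeasureTheory Set Filter Topology

lemma intervalIntegral_nonpos_of_le_deriv {f F F' : ℝ → ℝ} {a b : ℝ} (hab : a ≤ b)
    (hcont : ContinuousOn F (Icc a b)) (hderiv : ∀ x ∈ Ioo a b, HasDerivAt F (F' x) x)
    (hle : ∀ x ∈ Ioo a b, f x ≤ F' x) (hF : F b ≤ F a) : ∫ x in a..b, f x ≤ 0 := by
  by_cases hf : IntervalIntegrable f volume a b
  · have := intervalIntegral.integral_le_sub_of_hasDeriv_right_of_le hab hcont
      (fun x hx => (hderiv x hx).hasDerivWithinAt)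
      ((intervalIntegrable_iff_integrableOn_Icc_of_le hab).1 hf) hle
    linarith
  · rw [intervalIntegral.integral_undef hf]

/-- The mean `(1 / x) * ∫₀ˣ w`. As a `dslope` it takes the value `w 0` at the origin, where the
formula has the junk value `0`. -/
noncomputable def runningMean (w : ℝ → ℝ) : ℝ → ℝ := dslope (fun x => ∫ y in (0:ℝ)..x, w y) 0

section runningMean

variable {w : ℝ → ℝ} {x : ℝ}

lemma one_div_mul_integral_eventuallyEq_runningMean (hx : x ≠ 0) :
    (fun z => (1 / z) * ∫ y in (0:ℝ)..z, w y) =ᶠ[𝓝 x] runningMean w := by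
  filter_upwards [dslope_eventuallyEq_slope_of_ne (fun z => ∫ y in (0:ℝ)..z, w y) hx] with z hz
  rw [runningMean, hz, slope_def_field]
  simp [div_eq_inv_mul]

lemma mul_runningMean (w : ℝ → ℝ) (x : ℝ) : x * runningMean w x = ∫ y in (0:ℝ)..x, w y := by
  simpa [runningMean] using sub_smul_dslope (fun x => ∫ y in (0:ℝ)..x, w y) 0 x

lemma runningMean_zero (hw : Continuous w) : runningMean w 0 = w 0 := by
  rw [runningMean, dslope_same, hw.deriv_integral]

lemma continuous_runningMean (hw : Continuous w) : Continuous (runningMean w) := by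
  refine continuous_iff_continuousAt.2 fun x => ?_
  rcases eq_or_ne x 0 with rfl | hx
  · exact continuousAt_dslope_same.2
      (hw.integral_hasStrictDerivAt 0 0).hasDerivAt.differentiableAt
  · exact (continuousAt_dslope_of_ne hx).2
      (hw.integral_hasStrictDerivAt 0 x).hasDerivAt.continuousAt

lemma differentiableAt_runningMean (hw : Continuous w) (hx : x ≠ 0) :
    DifferentiableAt ℝ (runningMean w) x :=
  (differentiableAt_dslope_of_ne hx).2
    (hw.integral_hasStrictDerivAt 0 x).hasDerivAt.differentiableAt

lemma runningMean_add_mul_deriv (hw : Continuous w) (hx : x ≠ 0) :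
    runningMean w x + x * deriv (runningMean w) x = w x := by
  have hprod : HasDerivAt (fun z => z * runningMean w z)
      (1 * runningMean w x + x * deriv (runningMean w) x) x :=
    (hasDerivAt_id' x).mul (differentiableAt_runningMean hw hx).hasDerivAt
  simp only [mul_runningMean] at hprod
  simpa using hprod.unique (hw.integral_hasStrictDerivAt 0 x).hasDerivAt

lemma mul_sub_deriv_runningMean (hw : Continuous w) (hx : x ≠ 0) :
    w x * (deriv w x - deriv (runningMean w) x) =
      w x * deriv w x - runningMean w x * deriv (runningMean w) x
        - x * deriv (runningMean w) x ^ 2 := by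
  linear_combination deriv (runningMean w) x * runningMean_add_mul_deriv hw hx

lemma integral_mul_sub_deriv_runningMean_nonpos (hw : Differentiable ℝ w) {R : ℝ} (hR : 0 ≤ R)
    (hwR : w R = 0) : ∫ x in (0:ℝ)..R, w x * (deriv w x - deriv (runningMean w) x) ≤ 0 := by
  have hwc := hw.continuous
  refine intervalIntegral_nonpos_of_le_deriv (F := fun x => (w x ^ 2 - runningMean w x ^ 2) / 2)
    hR (((hwc.pow 2).sub ((continuous_runningMean hwc).pow 2)).div_const 2).continuousOn
    (fun x hx => (((hw x).hasDerivAt.pow 2).sub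
      ((differentiableAt_runningMean hwc hx.1.ne').hasDerivAt.pow 2)).div_const 2)
    (fun x hx => ?_) ?_
  · rw [mul_sub_deriv_runningMean hwc hx.1.ne']
    nlinarith [mul_nonneg hx.1.le (sq_nonneg (deriv (runningMean w) x))]
  · simp only [hwR, runningMean_zero hwc]
    nlinarith [sq_nonneg (runningMean w R)]

end runningMean

theorem linear_stability_general (w : ℝ → ℝ) (hw : ContDiff ℝ 1 w) (hsupp : HasCompactSupport w) :
    ∫ x in Ioi (0:ℝ),
        w x * (deriv w x - deriv (fun z => (1 / z) * ∫ y in (0:ℝ)..z, w y) x) ≤ 0 := by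
  obtain ⟨R, hR, hwR⟩ := hsupp.exists_pos_le_norm
  have hvanish : ∀ x ∈ Ioi 0 \ Ioc 0 R,
      w x * (deriv w x - deriv (fun z => (1 / z) * ∫ y in (0:ℝ)..z, w y) x) = 0 := by
    rintro x ⟨hx0, hxR⟩
    have hRx : R < x := lt_of_not_ge fun h => hxR ⟨hx0, h⟩
    rw [hwR x (by rw [Real.norm_of_nonneg hx0.le]; exact hRx.le), zero_mul]
  calc _ = ∫ x in Ioc 0 R,
          w x * (deriv w x - deriv (fun z => (1 / z) * ∫ y in (0:ℝ)..z, w y) x) :=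
        setIntegral_eq_of_subset_of_forall_sdiff_eq_zero measurableSet_Ioi Ioc_subset_Ioi_self
          hvanish
    _ = ∫ x in (0:ℝ)..R, w x * (deriv w x - deriv (runningMean w) x) := by
        rw [intervalIntegral.integral_of_le hR.le]
        refine setIntegral_congr_fun measurableSet_Ioc fun x hx => ?_
        rw [(one_div_mul_integral_eventuallyEq_runningMean hx.1.ne').deriv_eq]
    _ ≤ 0 := integral_mul_sub_deriv_runningMean_nonpos (hw.differentiable one_ne_zero) hR.le
        (hwR R (Real.norm_of_nonneg hR.le).ge)

theorem linear_stability (w : ℝ → ℝ) (hw : ContDiff ℝ 1 w) (hsupp : HasCompactSupport w)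
    (hint : IntegrableOn (fun x => w x ^ 2 / x) (Ioi 0)) :
    ∫ x in Ioi (0:ℝ),
        w x * (deriv w x - deriv (fun z => (1 / z) * ∫ y in (0:ℝ)..z, w y) x) ≤ 0 :=
  linear_stability_general w hw hsupp
end

section
/- If f:(0,∞)→ℝ is measurable, not a.e. zero, and ∫₀^∞ f(x)²/x dx < ∞, then ∫₀^∞ (f(x)/x²)(∫₀^x f(y) dy) dx < ∫₀^∞ f(x)²/x dx (strict inequality). -/
/-!
Put `A = ∫ f(x)²/x` and `L = ∫ (f(x)/x²) ∫₀ˣ f`, everything over `(0, ∞)`.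
Since `∫₀^∞ dy / max(x, y)² = 2/x`, and splitting the quadrant along the diagonal shows
`∫∫ f(x) f(y) / max(x, y)² = 2L`, one gets
`∫∫ (f(x) - f(y))² / max(x, y)² dx dy = 4A - 4L ≥ 0`.
Equality would force `f` to be a.e. constant, and `c²/x` is integrable on `(0, ∞)` only for `c = 0`.
-/

open MeasureTheory Set

noncomputable def invSqMax (p : ℝ × ℝ) : ℝ := (max p.1 p.2 ^ 2)⁻¹

lemma invSqMax_nonneg (p : ℝ × ℝ) : 0 ≤ invSqMax p := inv_nonneg.2 (sq_nonneg _)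

lemma invSqMax_pos {p : ℝ × ℝ} (hp : 0 < p.1) : 0 < invSqMax p :=
  inv_pos.2 (pow_pos (lt_max_of_lt_left hp) 2)

lemma invSqMax_swap (p : ℝ × ℝ) : invSqMax p.swap = invSqMax p := by
  simp only [invSqMax, Prod.fst_swap, Prod.snd_swap, max_comm]

lemma invSqMax_of_le {p : ℝ × ℝ} (h : p.2 ≤ p.1) : invSqMax p = (p.1 ^ 2)⁻¹ := by
  rw [invSqMax, max_eq_left h]

@[fun_prop]
lemma measurable_invSqMax : Measurable invSqMax := by
  unfold invSqMax; fun_prop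

lemma invSqMax_eqOn_Ioc (x : ℝ) : EqOn (fun y => invSqMax (x, y)) (fun _ => (x ^ 2)⁻¹) (Ioc 0 x) :=
  fun _ hy => invSqMax_of_le hy.2

lemma invSqMax_eqOn_Ioi {x : ℝ} (hx : 0 ≤ x) :
    EqOn (fun y => invSqMax (x, y)) (fun y => y ^ (-2 : ℝ)) (Ioi x) := by
  intro y (hy : x < y)
  show invSqMax (x, y) = y ^ (-2 : ℝ)
  rw [← invSqMax_swap, Prod.swap_prod_mk, invSqMax_of_le hy.le, Real.rpow_neg (hx.trans hy.le)]
  norm_cast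

lemma integrableOn_invSqMax {x : ℝ} (hx : 0 < x) :
    IntegrableOn (fun y => invSqMax (x, y)) (Ioi 0) := by
  rw [← Ioc_union_Ioi_eq_Ioi hx.le]
  refine IntegrableOn.union ?_ ?_
  · exact (integrableOn_const (by simp)).congr_fun (invSqMax_eqOn_Ioc x).symm measurableSet_Ioc
  · exact (integrableOn_Ioi_rpow_of_lt (by norm_num) hx).congr_fun
      (invSqMax_eqOn_Ioi hx.le).symm measurableSet_Ioi

lemma integral_invSqMax {x : ℝ} (hx : 0 < x) : ∫ y in Ioi 0, invSqMax (x, y) = 2 / x := by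
  have h := integrableOn_invSqMax hx
  rw [← Ioc_union_Ioi_eq_Ioi hx.le] at h ⊢
  rw [setIntegral_union Ioc_disjoint_Ioi_same measurableSet_Ioi h.left_of_union h.right_of_union,
    setIntegral_congr_fun measurableSet_Ioc (invSqMax_eqOn_Ioc x),
    setIntegral_congr_fun measurableSet_Ioi (invSqMax_eqOn_Ioi hx.le),
    setIntegral_const, integral_Ioi_rpow_of_lt (by norm_num) hx, Real.volume_real_Ioc_of_le hx.le]
  norm_num [Real.rpow_neg_one]
  field_simp
  ring

local notation "μ₊" => volume.restrict (Ioi (0 : ℝ))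

lemma setIntegral_Ioi_indicator_of_ae_eq_Iic {E : Type*} [NormedAddCommGroup E]
    [NormedSpace ℝ E] {s : Set ℝ} {x : ℝ} (hx : 0 ≤ x) (hs : s =ᵐ[volume] Iic x) (g : ℝ → E) :
    ∫ y in Ioi 0, s.indicator g y = ∫ y in 0..x, g y := by
  rw [integral_congr_ae (ae_restrict_of_ae (indicator_ae_eq_of_ae_eq_set hs)),
    integral_indicator measurableSet_Iic, Measure.restrict_restrict measurableSet_Iic,
    Iic_inter_Ioi, intervalIntegral.integral_of_le hx]

lemma exists_ae_eq_const_of_ae_prod {α β : Type*} [MeasurableSpace α] {μ : Measure α} [SFinite μ]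
    (hμ : μ ≠ 0) {g : α → β} (h : ∀ᵐ p ∂μ.prod μ, g p.1 = g p.2) :
    ∃ c, g =ᵐ[μ] fun _ => c := by
  have := ae_neBot.2 hμ
  obtain ⟨x, hx⟩ := (Measure.ae_ae_of_ae_prod h).exists
  exact ⟨g x, hx.mono fun _ hy => hy.symm⟩

lemma eq_zero_of_integrableOn_Ioi_div {c : ℝ} (h : IntegrableOn (fun x => c / x) (Ioi 0)) :
    c = 0 := by
  by_contra hc
  refine not_integrableOn_Ioi_rpow (-1)
    (IntegrableOn.congr_fun (h.const_mul c⁻¹) (fun x _ => ?_) measurableSet_Ioi)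
  rw [Real.rpow_neg_one]
  field_simp

lemma sub_sq_mul_invSqMax_eq (f : ℝ → ℝ) (p : ℝ × ℝ) : (f p.1 - f p.2) ^ 2 * invSqMax p =
    f p.1 ^ 2 * invSqMax p + f p.2 ^ 2 * invSqMax p - 2 * (f p.1 * f p.2 * invSqMax p) := by
  ring

noncomputable def triangleIntegrand (f : ℝ → ℝ) (s : ℝ → Set ℝ) (p : ℝ × ℝ) : ℝ :=
  f p.1 / p.1 ^ 2 * (s p.1).indicator f p.2

-- `Iic` on one side and `Iio` on the other, so that the diagonal is counted once.
lemma mul_mul_invSqMax_eq_triangleIntegrand (f : ℝ → ℝ) (p : ℝ × ℝ) :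
    f p.1 * f p.2 * invSqMax p = triangleIntegrand f Iic p + triangleIntegrand f Iio p.swap := by
  simp only [triangleIntegrand, Prod.fst_swap, Prod.snd_swap]
  rcases le_or_gt p.2 p.1 with h | h
  · rw [indicator_of_mem (show p.2 ∈ Iic p.1 from h),
      indicator_of_notMem (show p.1 ∉ Iio p.2 from not_lt.2 h), invSqMax_of_le h]
    ring
  · rw [indicator_of_notMem (show p.2 ∉ Iic p.1 from not_le.2 h),
      indicator_of_mem (show p.1 ∈ Iio p.2 from h), ← invSqMax_swap, invSqMax_of_le h.le]
    simp only [Prod.fst_swap]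
    ring

section

variable {f : ℝ → ℝ} (hf : Measurable f) (hint : IntegrableOn (fun x => f x ^ 2 / x) (Ioi 0))
include hf hint

lemma integrable_sq_fst_mul_invSqMax :
    Integrable (fun p : ℝ × ℝ => f p.1 ^ 2 * invSqMax p) (μ₊.prod μ₊) := by
  refine (integrable_prod_iff (by fun_prop)).2 ⟨?_, ?_⟩
  · filter_upwards [ae_restrict_mem measurableSet_Ioi] with x hx
    exact (integrableOn_invSqMax hx).const_mul _
  · refine (hint.const_mul 2).congr ?_
    filter_upwards [ae_restrict_mem measurableSet_Ioi] with x hx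
    simp_rw [Real.norm_of_nonneg (mul_nonneg (sq_nonneg _) (invSqMax_nonneg _)),
      integral_const_mul, integral_invSqMax hx]
    ring

lemma integral_sq_fst_mul_invSqMax :
    ∫ p, f p.1 ^ 2 * invSqMax p ∂(μ₊.prod μ₊) = 2 * ∫ x in Ioi 0, f x ^ 2 / x := by
  rw [integral_prod _ (integrable_sq_fst_mul_invSqMax hf hint), ← integral_const_mul]
  refine setIntegral_congr_fun measurableSet_Ioi fun x (hx : 0 < x) => ?_
  simp only [integral_const_mul, integral_invSqMax hx]
  ring

lemma integrable_sq_snd_mul_invSqMax :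
    Integrable (fun p : ℝ × ℝ => f p.2 ^ 2 * invSqMax p) (μ₊.prod μ₊) := by
  simpa only [Function.comp_def, Prod.fst_swap, invSqMax_swap] using
    (integrable_sq_fst_mul_invSqMax hf hint).swap

lemma integral_sq_snd_mul_invSqMax :
    ∫ p, f p.2 ^ 2 * invSqMax p ∂(μ₊.prod μ₊) = 2 * ∫ x in Ioi 0, f x ^ 2 / x := by
  rw [← integral_sq_fst_mul_invSqMax hf hint, ← integral_prod_swap (fun p => f p.1 ^ 2 * _)]
  simp only [Prod.fst_swap, invSqMax_swap]

lemma integrable_sq_add_sq_mul_invSqMax :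
    Integrable (fun p : ℝ × ℝ => f p.1 ^ 2 * invSqMax p + f p.2 ^ 2 * invSqMax p) (μ₊.prod μ₊) :=
  (integrable_sq_fst_mul_invSqMax hf hint).add (integrable_sq_snd_mul_invSqMax hf hint)

lemma integrable_of_abs_le_abs_mul_mul_invSqMax {g : ℝ × ℝ → ℝ} (hg : Measurable g)
    (hle : ∀ p, |g p| ≤ |f p.1 * f p.2| * invSqMax p) :
    Integrable g (μ₊.prod μ₊) := by
  refine (integrable_sq_add_sq_mul_invSqMax hf hint).mono' hg.aestronglyMeasurable
    (ae_of_all _ fun p => (hle p).trans ?_)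
  rw [← add_mul, abs_mul]
  gcongr
  · exact invSqMax_nonneg p
  · nlinarith [sq_nonneg (|f p.1| - |f p.2|), sq_abs (f p.1), sq_abs (f p.2)]

lemma integrable_mul_mul_invSqMax :
    Integrable (fun p : ℝ × ℝ => f p.1 * f p.2 * invSqMax p) (μ₊.prod μ₊) :=
  integrable_of_abs_le_abs_mul_mul_invSqMax hf hint (by fun_prop) fun p => by
    rw [abs_mul _ (invSqMax p), abs_of_nonneg (invSqMax_nonneg p)]

section Triangle

variable {s : ℝ → Set ℝ} (hmeas : MeasurableSet {p : ℝ × ℝ | p.2 ∈ s p.1})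
  (hsub : ∀ x, s x ⊆ Iic x)
include hmeas hsub

lemma integrable_triangleIntegrand : Integrable (triangleIntegrand f s) (μ₊.prod μ₊) := by
  refine integrable_of_abs_le_abs_mul_mul_invSqMax hf hint
    ((hf.comp measurable_fst).div (measurable_fst.pow_const 2) |>.mul
      ((hf.comp measurable_snd).indicator hmeas)) fun p => ?_
  rw [triangleIntegrand]
  by_cases hp : p.2 ∈ s p.1
  · rw [indicator_of_mem hp, invSqMax_of_le (hsub _ hp), div_mul_eq_mul_div, abs_div, abs_sq,
      div_eq_mul_inv]
  · rw [indicator_of_notMem hp, mul_zero, abs_zero]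
    exact mul_nonneg (abs_nonneg _) (invSqMax_nonneg p)

lemma integral_triangleIntegrand (hae : ∀ x, s x =ᵐ[volume] Iic x) :
    ∫ p, triangleIntegrand f s p ∂(μ₊.prod μ₊) = ∫ x in Ioi 0, f x / x ^ 2 * ∫ y in 0..x, f y := by
  rw [integral_prod _ (integrable_triangleIntegrand hf hint hmeas hsub)]
  refine setIntegral_congr_fun measurableSet_Ioi fun x (hx : 0 < x) => ?_
  simp only [triangleIntegrand]
  rw [integral_const_mul, setIntegral_Ioi_indicator_of_ae_eq_Iic hx.le (hae x)]

end Triangle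

lemma integral_mul_mul_invSqMax :
    ∫ p, f p.1 * f p.2 * invSqMax p ∂(μ₊.prod μ₊) =
      2 * ∫ x in Ioi 0, f x / x ^ 2 * ∫ y in 0..x, f y := by
  have hle : MeasurableSet {p : ℝ × ℝ | p.2 ≤ p.1} := measurableSet_le measurable_snd measurable_fst
  have hlt : MeasurableSet {p : ℝ × ℝ | p.2 < p.1} := measurableSet_lt measurable_snd measurable_fst
  have hIic := integrable_triangleIntegrand (s := Iic) hf hint hle fun _ => subset_rfl
  have hIio := integrable_triangleIntegrand (s := Iio) hf hint hlt fun _ => Iio_subset_Iic_self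
  simp_rw [mul_mul_invSqMax_eq_triangleIntegrand]
  rw [integral_add hIic (hIio.swap : Integrable (fun p => triangleIntegrand f Iio p.swap) _),
    integral_prod_swap (triangleIntegrand f Iio),
    integral_triangleIntegrand hf hint hle (fun _ => subset_rfl) fun _ => ae_eq_refl _,
    integral_triangleIntegrand (s := Iio) hf hint hlt (fun _ => Iio_subset_Iic_self)
      fun _ => Iio_ae_eq_Iic]
  ring

lemma integrable_sub_sq_mul_invSqMax :
    Integrable (fun p : ℝ × ℝ => (f p.1 - f p.2) ^ 2 * invSqMax p) (μ₊.prod μ₊) := by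
  simp_rw [sub_sq_mul_invSqMax_eq]
  exact (integrable_sq_add_sq_mul_invSqMax hf hint).sub
    ((integrable_mul_mul_invSqMax hf hint).const_mul 2)

lemma integral_sub_sq_mul_invSqMax :
    ∫ p, (f p.1 - f p.2) ^ 2 * invSqMax p ∂(μ₊.prod μ₊) =
      4 * (∫ x in Ioi 0, f x ^ 2 / x) - 4 * ∫ x in Ioi 0, f x / x ^ 2 * ∫ y in 0..x, f y := by
  simp_rw [sub_sq_mul_invSqMax_eq]
  rw [integral_sub (integrable_sq_add_sq_mul_invSqMax hf hint)
      ((integrable_mul_mul_invSqMax hf hint).const_mul 2),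
    integral_add (integrable_sq_fst_mul_invSqMax hf hint) (integrable_sq_snd_mul_invSqMax hf hint),
    integral_const_mul, integral_sq_fst_mul_invSqMax hf hint, integral_sq_snd_mul_invSqMax hf hint,
    integral_mul_mul_invSqMax hf hint]
  ring

lemma ae_eq_of_integral_sub_sq_mul_invSqMax_eq_zero
    (h0 : ∫ p, (f p.1 - f p.2) ^ 2 * invSqMax p ∂(μ₊.prod μ₊) = 0) :
    ∀ᵐ p ∂(μ₊.prod μ₊), f p.1 = f p.2 := by
  have hzero := (integral_eq_zero_iff_of_nonneg (fun p => mul_nonneg (sq_nonneg _)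
    (invSqMax_nonneg p)) (integrable_sub_sq_mul_invSqMax hf hint)).1 h0
  have hpos : ∀ᵐ p ∂(μ₊.prod μ₊), 0 < p.1 := by
    rw [Measure.prod_restrict]
    filter_upwards [ae_restrict_mem (measurableSet_Ioi.prod measurableSet_Ioi)] with p hp
    exact hp.1
  filter_upwards [hzero, hpos] with p hp hp1
  have := (mul_eq_zero.1 hp).resolve_right (invSqMax_pos hp1).ne'
  exact sub_eq_zero.1 (pow_eq_zero_iff two_ne_zero |>.1 this)

lemma integral_sub_sq_mul_invSqMax_pos (hne : ¬ f =ᵐ[volume.restrict (Ioi 0)] 0) :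
    0 < ∫ p, (f p.1 - f p.2) ^ 2 * invSqMax p ∂(μ₊.prod μ₊) := by
  refine (integral_nonneg fun p => mul_nonneg (sq_nonneg _) (invSqMax_nonneg p)).lt_of_ne
    fun h0 => hne ?_
  obtain ⟨c, hc⟩ := exists_ae_eq_const_of_ae_prod (by simp)
    (ae_eq_of_integral_sub_sq_mul_invSqMax_eq_zero hf hint h0.symm)
  have hc0 : c ^ 2 = 0 := eq_zero_of_integrableOn_Ioi_div <| hint.congr <| by
    filter_upwards [hc] with x hx
    rw [hx]
  rw [pow_eq_zero_iff two_ne_zero] at hc0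
  exact hc.trans (by rw [hc0]; rfl)

end

theorem dual_hardy_strict (f : ℝ → ℝ) (hf : Measurable f)
    (hne : ¬ (f =ᵐ[volume.restrict (Ioi 0)] 0))
    (hint : IntegrableOn (fun x => f x ^ 2 / x) (Ioi 0)) :
    ∫ x in Ioi (0:ℝ), (f x / x ^ 2) * (∫ y in (0:ℝ)..x, f y) <
      ∫ x in Ioi (0:ℝ), f x ^ 2 / x := by
  have hpos := integral_sub_sq_mul_invSqMax_pos hf hint hne
  rw [integral_sub_sq_mul_invSqMax hf hint] at hpos
  linarith
end

section
/- For measurable f:(0,∞)→ℝ with ∫₀^∞ f(x)²/x dx < ∞, the function x ↦ (f(x)/x²) ∫₀^x f(y) dy is integrable on (0,∞). -/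
/-!
Since `|f(x) F(x)| / x² ≤ f(x)²/x + F(x)²/x³` with `F(x) = ∫₀ˣ f`, it suffices to bound
`∫₀^∞ F²/x³` by `∫₀^∞ f²/x`. This is a Hardy inequality: Cauchy–Schwarz gives
`F(x)² ≤ x ∫₀ˣ f²`, and exchanging the order of integration turns `∫₀^∞ x⁻² ∫₀ˣ f(y)² dy dx`
into `∫₀^∞ f(y)² ∫_y^∞ x⁻² dx dy = ∫₀^∞ f(y)²/y dy`.
-/

open MeasureTheory Set
open scoped ENNReal

theorem sq_lintegral_le_measure_univ_mul_lintegral_sq {α : Type*} [MeasurableSpace α]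
    (μ : Measure α) {g : α → ℝ≥0∞} (hg : AEMeasurable g μ) :
    (∫⁻ a, g a ∂μ) ^ 2 ≤ μ univ * ∫⁻ a, g a ^ 2 ∂μ := by
  have h := ENNReal.lintegral_mul_le_Lp_mul_Lq μ Real.HolderConjugate.two_two hg aemeasurable_const
    (g := fun _ => 1)
  simp only [Pi.mul_apply, mul_one, ENNReal.one_rpow, lintegral_const, one_mul] at h
  calc (∫⁻ a, g a ∂μ) ^ 2
      ≤ ((∫⁻ a, g a ^ (2 : ℝ) ∂μ) ^ (1 / 2 : ℝ) * μ univ ^ (1 / 2 : ℝ)) ^ 2 := by gcongr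
    _ = μ univ * ∫⁻ a, g a ^ 2 ∂μ := by
        rw [mul_pow, ← ENNReal.rpow_natCast, ← ENNReal.rpow_natCast, ← ENNReal.rpow_mul,
          ← ENNReal.rpow_mul]
        norm_num [mul_comm]

theorem ENNReal.ofReal_sq_eq_enorm_sq (r : ℝ) : ENNReal.ofReal (r ^ 2) = ‖r‖ₑ ^ 2 := by
  rw [Real.enorm_eq_ofReal_abs, ← ENNReal.ofReal_pow (abs_nonneg r), sq_abs]

theorem MeasureTheory.StronglyMeasurable.setIntegral_prodMk_preimage {α β E : Type*}
    [MeasurableSpace α] [MeasurableSpace β] [NormedAddCommGroup E] [NormedSpace ℝ E]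
    {ν : Measure β} [SFinite ν] {f : β → E} (hf : StronglyMeasurable f) {S : Set (α × β)}
    (hS : MeasurableSet S) : StronglyMeasurable fun x => ∫ y in Prod.mk x ⁻¹' S, f y ∂ν := by
  simp_rw [← integral_indicator (measurable_prodMk_left hS)]
  exact StronglyMeasurable.integral_prod_right (f := fun x y => (Prod.mk x ⁻¹' S).indicator f y)
    ((hf.comp_measurable measurable_snd).indicator hS)

theorem MeasureTheory.StronglyMeasurable.intervalIntegral_primitive {E : Type*}
    [NormedAddCommGroup E] [NormedSpace ℝ E] {μ : Measure ℝ} [SFinite μ] {f : ℝ → E}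
    (hf : StronglyMeasurable f) (a : ℝ) : StronglyMeasurable fun x => ∫ y in a..x, f y ∂μ :=
  (hf.setIntegral_prodMk_preimage (S := {p : ℝ × ℝ | a < p.2 ∧ p.2 ≤ p.1})
      ((_root_.measurableSet_lt measurable_const measurable_snd).inter
        (_root_.measurableSet_le measurable_snd measurable_fst))).sub
    (hf.setIntegral_prodMk_preimage (S := {p : ℝ × ℝ | p.1 < p.2 ∧ p.2 ≤ a})
      ((_root_.measurableSet_lt measurable_fst measurable_snd).inter
        (_root_.measurableSet_le measurable_snd measurable_const)))

theorem lintegral_Ioi_lintegral_Ioc_mul {μ ν : Measure ℝ} [SFinite μ] [SFinite ν]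
    {g w : ℝ → ℝ≥0∞} (hg : Measurable g) (hw : Measurable w) (a : ℝ) :
    ∫⁻ x in Ioi a, (∫⁻ y in Ioc a x, g y ∂ν) * w x ∂μ
      = ∫⁻ y in Ioi a, g y * ∫⁻ x in Ici y, w x ∂μ ∂ν := by
  have hIoc : ∀ x, ∫⁻ y in Ioc a x, g y ∂ν = ∫⁻ y in Ioi a, (Iic x).indicator g y ∂ν :=
    fun x => by
      rw [lintegral_indicator measurableSet_Iic, Measure.restrict_restrict measurableSet_Iic,
        Iic_inter_Ioi]
  have hIci : ∀ y ∈ Ioi a, ∫⁻ x in Ici y, w x ∂μ = ∫⁻ x in Ioi a, (Ici y).indicator w x ∂μ :=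
    fun y hy => by
      rw [lintegral_indicator measurableSet_Ici, Measure.restrict_restrict measurableSet_Ici,
        inter_eq_left.mpr (Ici_subset_Ioi.mpr hy)]
  have hmeas : Measurable (Function.uncurry fun x y => (Iic x).indicator g y * w x) := by
    have hgraph : Function.uncurry (fun x y => (Iic x).indicator g y * w x)
        = fun p : ℝ × ℝ => {p : ℝ × ℝ | p.2 ≤ p.1}.indicator (g ∘ Prod.snd) p * w p.1 := by
      ext ⟨x, y⟩
      simp [indicator_apply]
    rw [hgraph]
    exact ((hg.comp measurable_snd).indicator (measurableSet_le measurable_snd measurable_fst)).mul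
      (hw.comp measurable_fst)
  calc ∫⁻ x in Ioi a, (∫⁻ y in Ioc a x, g y ∂ν) * w x ∂μ
      = ∫⁻ x in Ioi a, ∫⁻ y in Ioi a, (Iic x).indicator g y * w x ∂ν ∂μ := by
        simp_rw [hIoc, lintegral_mul_const _ (hg.indicator measurableSet_Iic)]
    _ = ∫⁻ y in Ioi a, ∫⁻ x in Ioi a, (Iic x).indicator g y * w x ∂μ ∂ν :=
        lintegral_lintegral_swap hmeas.aemeasurable
    _ = ∫⁻ y in Ioi a, g y * ∫⁻ x in Ici y, w x ∂μ ∂ν := by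
        refine setLIntegral_congr_fun measurableSet_Ioi fun y hy => ?_
        rw [hIci y hy, ← lintegral_const_mul _ (hw.indicator measurableSet_Ici)]
        congr 1 with x
        by_cases hyx : y ≤ x <;> simp [hyx]

theorem lintegral_Ici_ofReal_rpow {s y : ℝ} (hs : s < -1) (hy : 0 < y) :
    ∫⁻ x in Ici y, ENNReal.ofReal (x ^ s) = ENNReal.ofReal (-y ^ (s + 1) / (s + 1)) := by
  rw [← setLIntegral_congr Ioi_ae_eq_Ici, ← integral_Ioi_rpow_of_lt hs hy,
    ofReal_integral_eq_lintegral_ofReal (integrableOn_Ioi_rpow_of_lt hs hy)]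
  filter_upwards [self_mem_ae_restrict measurableSet_Ioi] with x hx
  exact Real.rpow_nonneg (hy.trans hx).le s

theorem ofReal_sq_intervalIntegral_le {f : ℝ → ℝ} (hf : Measurable f) {x : ℝ} (hx : 0 ≤ x) :
    ENNReal.ofReal ((∫ y in 0..x, f y) ^ 2)
      ≤ ENNReal.ofReal x * ∫⁻ y in Ioc 0 x, ENNReal.ofReal (f y ^ 2) := by
  simp_rw [ENNReal.ofReal_sq_eq_enorm_sq]
  calc ‖∫ y in 0..x, f y‖ₑ ^ 2 ≤ (∫⁻ y in Ioc 0 x, ‖f y‖ₑ) ^ 2 := by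
        rw [intervalIntegral.integral_of_le hx]
        gcongr
        exact enorm_integral_le_lintegral_enorm f
    _ ≤ ENNReal.ofReal x * ∫⁻ y in Ioc 0 x, ‖f y‖ₑ ^ 2 := by
        simpa using sq_lintegral_le_measure_univ_mul_lintegral_sq (volume.restrict (Ioc 0 x))
          hf.enorm.aemeasurable

theorem lintegral_sq_intervalIntegral_div_pow_three_le {f : ℝ → ℝ} (hf : Measurable f) :
    ∫⁻ x in Ioi 0, ENNReal.ofReal ((∫ y in 0..x, f y) ^ 2 / x ^ 3)
      ≤ ∫⁻ y in Ioi 0, ENNReal.ofReal (f y ^ 2 / y) := by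
  have hpoint : ∀ x ∈ Ioi (0 : ℝ), ENNReal.ofReal ((∫ y in 0..x, f y) ^ 2 / x ^ 3)
      ≤ (∫⁻ y in Ioc 0 x, ENNReal.ofReal (f y ^ 2)) * ENNReal.ofReal (x ^ (-2 : ℝ)) := by
    intro x (hx : 0 < x)
    have hx2 : x ^ (-2 : ℝ) = x * (1 / x ^ 3) := by
      rw [Real.rpow_neg hx.le, Real.rpow_two]
      field_simp
    rw [div_eq_mul_one_div, ENNReal.ofReal_mul (sq_nonneg _), hx2,
      ENNReal.ofReal_mul hx.le, mul_left_comm, ← mul_assoc]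
    gcongr
    exact ofReal_sq_intervalIntegral_le hf hx.le
  calc ∫⁻ x in Ioi 0, ENNReal.ofReal ((∫ y in 0..x, f y) ^ 2 / x ^ 3)
      ≤ ∫⁻ x in Ioi 0,
          (∫⁻ y in Ioc 0 x, ENNReal.ofReal (f y ^ 2)) * ENNReal.ofReal (x ^ (-2 : ℝ)) :=
        setLIntegral_mono' measurableSet_Ioi hpoint
    _ = ∫⁻ y in Ioi 0, ENNReal.ofReal (f y ^ 2) * ∫⁻ x in Ici y, ENNReal.ofReal (x ^ (-2 : ℝ)) :=
        lintegral_Ioi_lintegral_Ioc_mul (by fun_prop) (by fun_prop) 0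
    _ = ∫⁻ y in Ioi 0, ENNReal.ofReal (f y ^ 2 / y) := by
        refine setLIntegral_congr_fun measurableSet_Ioi fun y (hy : 0 < y) => ?_
        rw [lintegral_Ici_ofReal_rpow (by norm_num) hy, ← ENNReal.ofReal_mul (sq_nonneg _)]
        norm_num [Real.rpow_neg_one, div_eq_mul_inv]

theorem abs_div_sq_mul_le {x : ℝ} (hx : 0 < x) (a b : ℝ) :
    |a / x ^ 2 * b| ≤ a ^ 2 / x + b ^ 2 / x ^ 3 := by
  have amgm : |a| * |b| * x ≤ a ^ 2 * x ^ 2 + b ^ 2 := by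
    nlinarith [two_mul_le_add_sq (|a| * x) |b|, sq_abs a, sq_abs b,
      mul_nonneg (mul_nonneg (abs_nonneg a) (abs_nonneg b)) hx.le]
  calc |a / x ^ 2 * b| = |a| * |b| * x / x ^ 3 := by
        rw [abs_mul, abs_div, abs_pow, abs_of_pos hx]
        field_simp
    _ ≤ (a ^ 2 * x ^ 2 + b ^ 2) / x ^ 3 := by gcongr
    _ = a ^ 2 / x + b ^ 2 / x ^ 3 := by field_simp

theorem integrableOn_sq_intervalIntegral_div_pow_three {f : ℝ → ℝ} (hf : Measurable f)
    (hint : IntegrableOn (fun x => f x ^ 2 / x) (Ioi 0)) :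
    IntegrableOn (fun x => (∫ y in (0:ℝ)..x, f y) ^ 2 / x ^ 3) (Ioi 0) := by
  have hF : Measurable fun x => ∫ y in (0:ℝ)..x, f y :=
    (hf.stronglyMeasurable.intervalIntegral_primitive 0).measurable
  have hnonneg : ∀ᵐ x ∂volume.restrict (Ioi (0 : ℝ)), 0 ≤ (∫ y in (0:ℝ)..x, f y) ^ 2 / x ^ 3 := by
    filter_upwards [self_mem_ae_restrict measurableSet_Ioi] with x (hx : 0 < x)
    positivity
  refine ⟨(by fun_prop : Measurable _).aestronglyMeasurable,
    (hasFiniteIntegral_iff_ofReal hnonneg).2 ?_⟩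
  exact (lintegral_sq_intervalIntegral_div_pow_three_le hf).trans_lt hint.lintegral_lt_top

theorem cross_term_integrable (f : ℝ → ℝ) (hf : Measurable f)
    (hint : IntegrableOn (fun x => f x ^ 2 / x) (Ioi 0)) :
    IntegrableOn (fun x => (f x / x ^ 2) * ∫ y in (0:ℝ)..x, f y) (Ioi 0) := by
  have hF : Measurable fun x => ∫ y in (0:ℝ)..x, f y :=
    (hf.stronglyMeasurable.intervalIntegral_primitive 0).measurable
  refine (hint.add (integrableOn_sq_intervalIntegral_div_pow_three hf hint)).mono'
    (by fun_prop : Measurable _).aestronglyMeasurable ?_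
  filter_upwards [self_mem_ae_restrict measurableSet_Ioi] with x (hx : 0 < x)
  exact abs_div_sq_mul_le hx (f x) _
end
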